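/- arXiv:1007.0878 — 2 statements merged into one kernel-verified Lean document; each statement's English description precedes it below -/
import Mathlib

section
/- Let a, b be 2-adic integers with binary expansions a = Σ a_i 2^i, b = Σ b_i 2^i, and write a + b = Σ c_i 2^i with all digits in {0,1}. Then c_0 ≡ a_0 + b_0 (mod 2), and for every t ≥ 1: c_t ≡ a_t + b_t + Σ_{i=0}^{t-1} a_i b_i · Π_{j=i+1}^{t-1} (a_j + b_j) (mod 2). -/
/-!
Comparing the expansions modulo `p ^ N` shows that the truncations `A_N, B_N, C_N` of `a, b, c`
satisfy `C_N = (A_N + B_N) % p ^ N`. Hence `c` is the output of schoolbook addition with carries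
`k_t = (A_t + B_t) / p ^ t`: `c_t = (a_t + b_t + k_t) % p` and `k_{t+1} = (a_t + b_t + k_t) / p`.
In base 2 all of `a_t, b_t, k_t` are bits, so the carry is their majority
`a_t b_t + (a_t + b_t) k_t` mod 2, and unrolling this linear recurrence from `k_0 = 0` gives the
formula.
-/

open Finset

namespace PadicInt
variable {p : ℕ} [Fact p.Prime]

theorem summable_mul_p_pow (x : ℕ → ℤ_[p]) : Summable fun i => x i * (p : ℤ_[p]) ^ i := by
  refine NonarchimedeanAddGroup.summable_of_tendsto_cofinite_zero ?_
  rw [Nat.cofinite_eq_atTop]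
  have hp : ‖(p : ℤ_[p])‖ < 1 := (norm_lt_one_iff_dvd _).2 dvd_rfl
  refine squeeze_zero_norm (fun i => ?_) (tendsto_pow_atTop_nhds_zero_of_lt_one (norm_nonneg _) hp)
  rw [norm_mul, norm_pow]
  exact mul_le_of_le_one_left (by positivity) (norm_le_one _)

theorem p_pow_dvd_tsum_sub_sum (x : ℕ → ℤ_[p]) (N : ℕ) :
    (p : ℤ_[p]) ^ N ∣ (∑' i, x i * (p : ℤ_[p]) ^ i) - ∑ i ∈ range N, x i * (p : ℤ_[p]) ^ i := by
  rw [← (summable_mul_p_pow x).sum_add_tsum_nat_add N, add_sub_cancel_left]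
  refine ⟨∑' i, x (i + N) * (p : ℤ_[p]) ^ i, ?_⟩
  rw [← (summable_mul_p_pow fun i => x (i + N)).tsum_mul_left]
  exact tsum_congr fun i => by ring

end PadicInt

def ofDigitsUpTo (p : ℕ) (x : ℕ → ℕ) (N : ℕ) : ℕ := ∑ i ∈ range N, x i * p ^ i

def addCarry (p : ℕ) (a b : ℕ → ℕ) (t : ℕ) : ℕ :=
  (ofDigitsUpTo p a t + ofDigitsUpTo p b t) / p ^ t

section Digits
variable {p : ℕ} {a b c x : ℕ → ℕ}

theorem ofDigitsUpTo_succ (x : ℕ → ℕ) (N : ℕ) :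
    ofDigitsUpTo p x (N + 1) = ofDigitsUpTo p x N + x N * p ^ N :=
  sum_range_succ _ _

theorem ofDigitsUpTo_lt (hx : ∀ i, x i < p) (N : ℕ) : ofDigitsUpTo p x N < p ^ N := by
  induction N with
  | zero => simp [ofDigitsUpTo]
  | succ N ih =>
    calc ofDigitsUpTo p x (N + 1) = ofDigitsUpTo p x N + x N * p ^ N := ofDigitsUpTo_succ x N
      _ < (x N + 1) * p ^ N := by linarith
      _ ≤ p ^ (N + 1) := by rw [pow_succ']; exact Nat.mul_le_mul_right _ (hx N)

theorem ofDigitsUpTo_modEq_of_tsum_add_eq [Fact p.Prime]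
    (hsum : (∑' i, (a i : ℤ_[p]) * p ^ i) + (∑' i, (b i : ℤ_[p]) * p ^ i)
        = ∑' i, (c i : ℤ_[p]) * p ^ i) (N : ℕ) :
    ofDigitsUpTo p c N ≡ ofDigitsUpTo p a N + ofDigitsUpTo p b N [MOD p ^ N] := by
  have hcast : ∀ x : ℕ → ℕ, (ofDigitsUpTo p x N : ℤ_[p]) =
      ∑ i ∈ range N, (x i : ℤ_[p]) * p ^ i := fun x => by simp [ofDigitsUpTo]
  rw [Nat.modEq_iff_dvd, Nat.cast_pow, ← PadicInt.pow_p_dvd_int_iff]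
  have htail := ((PadicInt.p_pow_dvd_tsum_sub_sum (fun i => (a i : ℤ_[p])) N).add
    (PadicInt.p_pow_dvd_tsum_sub_sum (fun i => (b i : ℤ_[p])) N)).sub
    (PadicInt.p_pow_dvd_tsum_sub_sum (fun i => (c i : ℤ_[p])) N)
  push_cast
  convert htail.neg_right using 1
  rw [hcast a, hcast b, hcast c]
  linear_combination hsum

theorem ofDigitsUpTo_div_pow_self (hx : ∀ i, x i < p) (t : ℕ) :
    ofDigitsUpTo p x (t + 1) / p ^ t = x t := by
  have hp : 0 < p ^ t := pow_pos ((Nat.zero_le _).trans_lt (hx 0)) t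
  rw [ofDigitsUpTo_succ, Nat.add_mul_div_right _ _ hp, Nat.div_eq_of_lt (ofDigitsUpTo_lt hx t),
    zero_add]

theorem addCarry_zero : addCarry p a b 0 = 0 := by simp [addCarry, ofDigitsUpTo]

theorem addCarry_lt_two (ha : ∀ i, a i < p) (hb : ∀ i, b i < p) (t : ℕ) :
    addCarry p a b t < 2 := by
  rw [addCarry, Nat.div_lt_iff_lt_mul (pow_pos ((Nat.zero_le _).trans_lt (ha 0)) t)]
  linarith [ofDigitsUpTo_lt ha t, ofDigitsUpTo_lt hb t]

theorem add_ofDigitsUpTo_succ_div_pow (hp : 0 < p) (t : ℕ) :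
    (ofDigitsUpTo p a (t + 1) + ofDigitsUpTo p b (t + 1)) / p ^ t
      = a t + b t + addCarry p a b t := by
  rw [ofDigitsUpTo_succ, ofDigitsUpTo_succ, addCarry,
    show ofDigitsUpTo p a t + a t * p ^ t + (ofDigitsUpTo p b t + b t * p ^ t)
      = ofDigitsUpTo p a t + ofDigitsUpTo p b t + (a t + b t) * p ^ t by ring,
    Nat.add_mul_div_right _ _ (pow_pos hp t)]
  ring

theorem addCarry_succ (hp : 0 < p) (t : ℕ) :
    addCarry p a b (t + 1) = (a t + b t + addCarry p a b t) / p := by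
  rw [← add_ofDigitsUpTo_succ_div_pow hp, Nat.div_div_eq_div_mul, ← pow_succ, addCarry]

theorem digit_eq_add_add_addCarry_mod (hc : ∀ i, c i < p) {t : ℕ}
    (hmod : ofDigitsUpTo p c (t + 1) ≡ ofDigitsUpTo p a (t + 1) + ofDigitsUpTo p b (t + 1)
      [MOD p ^ (t + 1)]) :
    c t = (a t + b t + addCarry p a b t) % p := by
  have hp : 0 < p := (Nat.zero_le _).trans_lt (hc 0)
  rw [← ofDigitsUpTo_div_pow_self hc, ← Nat.mod_eq_of_lt (ofDigitsUpTo_lt hc (t + 1)), hmod,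
    pow_succ, Nat.mod_mul_right_div_self, add_ofDigitsUpTo_succ_div_pow hp]

end Digits

theorem natCast_add_add_div_two {x y z : ℕ} (hx : x < 2) (hy : y < 2) (hz : z < 2) :
    (((x + y + z) / 2 : ℕ) : ZMod 2) = x * y + (x + y) * z := by
  interval_cases x <;> interval_cases y <;> interval_cases z <;> decide

theorem eq_sum_mul_prod_of_succ_eq {R : Type*} [CommSemiring R] {x f g : ℕ → R} (h0 : x 0 = 0)
    (hsucc : ∀ t, x (t + 1) = g t + f t * x t) (t : ℕ) :
    x t = ∑ i ∈ range t, g i * ∏ j ∈ Ico (i + 1) t, f j := by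
  induction t with
  | zero => simp [h0]
  | succ t ih =>
    rw [hsucc, ih, sum_range_succ, Ico_self, prod_empty, mul_one, mul_sum, add_comm]
    congr 1
    refine sum_congr rfl fun i hi => ?_
    rw [prod_Ico_succ_top (mem_range.1 hi)]
    ring

/-- Addition formula for 2-adic digits. -/
theorem two_adic_addition_digits (a b c : ℕ → ℕ)
    (ha : ∀ i, a i < 2) (hb : ∀ i, b i < 2) (hc : ∀ i, c i < 2)
    (hsum : (∑' i : ℕ, (a i : ℤ_[2]) * 2 ^ i) + (∑' i : ℕ, (b i : ℤ_[2]) * 2 ^ i)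
        = ∑' i : ℕ, (c i : ℤ_[2]) * 2 ^ i) :
    (c 0 : ZMod 2) = a 0 + b 0 ∧
    ∀ t, 1 ≤ t →
      (c t : ZMod 2) = a t + b t +
        ∑ i ∈ Finset.range t,
          (a i : ZMod 2) * b i * ∏ j ∈ Finset.Icc (i + 1) (t - 1), ((a j : ZMod 2) + b j) := by
  have hdigit (t : ℕ) : (c t : ZMod 2) = a t + b t + addCarry 2 a b t := by
    rw [digit_eq_add_add_addCarry_mod hc (ofDigitsUpTo_modEq_of_tsum_add_eq hsum _),
      ZMod.natCast_mod, Nat.cast_add, Nat.cast_add]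
  have hcarry : ∀ t, (addCarry 2 a b t : ZMod 2) =
      ∑ i ∈ range t, (a i : ZMod 2) * b i * ∏ j ∈ Ico (i + 1) t, ((a j : ZMod 2) + b j) :=
    eq_sum_mul_prod_of_succ_eq (by rw [addCarry_zero, Nat.cast_zero]) fun t => by
      rw [addCarry_succ two_pos, natCast_add_add_div_two (ha t) (hb t) (addCarry_lt_two ha hb t)]
  refine ⟨by rw [hdigit, addCarry_zero, Nat.cast_zero, add_zero], fun t ht => ?_⟩
  have ht' : ¬IsMin t := by simpa using Nat.one_le_iff_ne_zero.1 ht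
  simp_rw [hdigit, hcarry, Icc_sub_one_right_eq_Ico_of_not_isMin ht']
end

section
/- Let p ≥ 3 be a prime and suppose Σ_{i=0}^∞ a_i p^i = Σ_{i=0}^∞ b_i p^i as p-adic integers, where a_i ∈ {0, ±1, ..., ±(p-1)/2} (numerically least residues) and b_i ∈ {0, 1, ..., p-1}. Then for every t ≥ 0: b_t ≡ a_t + Σ_{λ=0}^{t-1} (Σ_{c=1}^{(p-1)/2} [(a_λ + c)^{p-1} - 1]) · Π_{λ < i < t} (1 - a_i^{p-1}) (mod p). -/
/-!
With `A t = ∑ i < t, a i * p ^ i` and `B t = ∑ i < t, b i * p ^ i`, equality of the two series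
gives `p ^ t ∣ B t - A t`. As `0 ≤ B t < p ^ t` and `2 * |A t| < p ^ t`, this pins down
`B t = A t + ε t * p ^ t` with the carry `ε t = [A t < 0]`, so `b t ≡ a t - ε t (mod p)`.
By Fermat the inner sum over `c` is `-[a l < 0]` and each factor `1 - a i ^ (p - 1)` is `[a i = 0]`,
so the `l`-th summand is `-1` exactly when `a l` is the last nonzero digit below `t` and is
negative; that is, the whole sum is `-[A t < 0] = -ε t`.
-/
open Finset

namespace PadicInt

variable {p : ℕ} [Fact p.Prime]

theorem summable_mul_pow (c : ℕ → ℤ_[p]) : Summable fun i => c i * (p : ℤ_[p]) ^ i := by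
  have hp : (1 : ℝ) < p := mod_cast (Fact.out : p.Prime).one_lt
  refine .of_norm_bounded (summable_geometric_of_lt_one (by positivity) (inv_lt_one_of_one_lt₀ hp))
    fun i => ?_
  calc ‖c i * (p : ℤ_[p]) ^ i‖ ≤ ‖c i‖ * ‖(p : ℤ_[p]) ^ i‖ := norm_mul_le _ _
    _ ≤ ‖(p : ℤ_[p]) ^ i‖ := mul_le_of_le_one_left (norm_nonneg _) (norm_le_one _)
    _ = (p : ℝ)⁻¹ ^ i := by simp

theorem tsum_mul_pow_eq_sum_add (c : ℕ → ℤ_[p]) (t : ℕ) :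
    ∑' i, c i * (p : ℤ_[p]) ^ i =
      ∑ i ∈ range t, c i * (p : ℤ_[p]) ^ i + (p : ℤ_[p]) ^ t * ∑' i, c (i + t) * (p : ℤ_[p]) ^ i := by
  rw [← (summable_mul_pow c).sum_add_tsum_nat_add t, ← (summable_mul_pow _).tsum_mul_left]
  congr 1
  exact tsum_congr fun i => by ring

theorem pow_dvd_sum_sub_of_tsum_eq {a b : ℕ → ℤ}
    (h : ∑' i, (a i : ℤ_[p]) * (p : ℤ_[p]) ^ i = ∑' i, (b i : ℤ_[p]) * (p : ℤ_[p]) ^ i) (t : ℕ) :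
    (p : ℤ) ^ t ∣ ∑ i ∈ range t, b i * (p : ℤ) ^ i - ∑ i ∈ range t, a i * (p : ℤ) ^ i := by
  rw [← pow_p_dvd_int_iff]
  rw [tsum_mul_pow_eq_sum_add (fun i => (a i : ℤ_[p])) t,
    tsum_mul_pow_eq_sum_add (fun i => (b i : ℤ_[p])) t] at h
  push_cast
  exact ⟨∑' i, (a (i + t) : ℤ_[p]) * (p : ℤ_[p]) ^ i - ∑' i, (b (i + t) : ℤ_[p]) * (p : ℤ_[p]) ^ i,
    by linear_combination -h⟩

end PadicInt

theorem mul_abs_sum_mul_pow_le {k q : ℤ} (hk : 0 ≤ k) (hq : 0 ≤ q) {c : ℕ → ℤ}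
    (hc : ∀ i, k * |c i| ≤ q - 1) (t : ℕ) :
    k * |∑ i ∈ range t, c i * q ^ i| ≤ q ^ t - 1 := by
  calc k * |∑ i ∈ range t, c i * q ^ i| ≤ ∑ i ∈ range t, k * |c i| * q ^ i := by
        refine mul_le_mul_of_nonneg_left (abs_sum_le_sum_abs _ _) hk |>.trans_eq ?_
        rw [mul_sum]
        exact sum_congr rfl fun i _ => by rw [abs_mul, abs_pow, abs_of_nonneg hq]; ring
    _ ≤ ∑ i ∈ range t, (q - 1) * q ^ i :=
        sum_le_sum fun i _ => mul_le_mul_of_nonneg_right (hc i) (pow_nonneg hq i)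
    _ = q ^ t - 1 := by rw [← mul_sum, mul_comm, geom_sum_mul]

theorem sum_range_succ_mul_prod_Ioo {R : Type*} [CommSemiring R] (x y : ℕ → R) (t : ℕ) :
    ∑ l ∈ range (t + 1), x l * ∏ i ∈ Ioo l (t + 1), y i =
      (∑ l ∈ range t, x l * ∏ i ∈ Ioo l t, y i) * y t + x t := by
  rw [sum_range_succ, sum_mul, Ioo_add_one_right_eq_Ioc, Ioc_self, prod_empty, mul_one]
  congr 1
  refine sum_congr rfl fun l hl => ?_
  rw [Ioo_add_one_right_eq_Ioc, ← Ioo_insert_right (mem_range.mp hl), prod_insert (by simp)]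
  ring

theorem Int.eq_add_ite_mul_of_dvd_sub {A B q : ℤ} (h : q ∣ B - A) (hB0 : 0 ≤ B) (hBq : B < q)
    (hA : 2 * |A| < q) : B = A + (if A < 0 then 1 else 0) * q := by
  have hdvd : q ∣ B - (A + (if A < 0 then 1 else 0) * q) := by
    simpa [sub_add_eq_sub_sub] using dvd_sub h (dvd_mul_left q (if A < 0 then 1 else 0))
  have habs : |B - (A + (if A < 0 then 1 else 0) * q)| < q := by
    rw [abs_lt]
    split_ifs <;> constructor <;> linarith [le_abs_self A, neg_abs_le A]
  linarith [Int.eq_zero_of_abs_lt_dvd hdvd habs]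

theorem ite_add_mul_neg {R : Type*} [Semiring R] {A a q : ℤ} (hA : |A| < q) :
    (if A + a * q < 0 then 1 else 0 : R) =
      (if A < 0 then 1 else 0) * (if a = 0 then 1 else 0) + (if a < 0 then 1 else 0) := by
  obtain ⟨hA₁, hA₂⟩ := abs_lt.mp hA
  rcases lt_trichotomy a 0 with ha | rfl | ha
  · have : A + a * q < 0 := by nlinarith
    simp [this, ha, ha.ne]
  · simp
  · have : ¬ A + a * q < 0 := by nlinarith
    simp [this, ha.ne', ha.not_gt]

namespace ZMod

variable {p : ℕ} [Fact p.Prime]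

theorem one_sub_intCast_pow_card_sub_one {z : ℤ} (hz : |z| < p) :
    1 - (z : ZMod p) ^ (p - 1) = if z = 0 then 1 else 0 := by
  split_ifs with h
  · simp [h, Nat.sub_ne_zero_of_lt (Fact.out : p.Prime).one_lt]
  · have : (z : ZMod p) ≠ 0 := fun h0 =>
      h (Int.eq_zero_of_abs_lt_dvd ((intCast_zmod_eq_zero_iff_dvd z p).mp h0) hz)
    rw [pow_card_sub_one_eq_one this, sub_self]

theorem sum_Icc_intCast_add_pow_card_sub_one {x : ℤ} (hx : |x| ≤ ((p : ℤ) - 1) / 2) :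
    ∑ c ∈ Icc 1 ((p - 1) / 2), (((x : ZMod p) + c) ^ (p - 1) - 1) = -(if x < 0 then 1 else 0) := by
  have hp := (Fact.out : p.Prime).two_le
  obtain ⟨hx₁, hx₂⟩ := abs_le.mp hx
  have hterm : ∀ c ∈ Icc 1 ((p - 1) / 2),
      ((x : ZMod p) + c) ^ (p - 1) - 1 = -(if x + c = 0 then 1 else 0) := by
    intro c hc
    rw [mem_Icc] at hc
    rw [← one_sub_intCast_pow_card_sub_one (abs_lt.mpr ⟨by omega, by omega⟩)]
    push_cast; ring
  rw [sum_congr rfl hterm, sum_neg_distrib]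
  congr 1
  split_ifs with hneg
  · rw [sum_eq_single_of_mem (-x).toNat (mem_Icc.mpr ⟨by omega, by omega⟩)]
    · simp only [Int.ofNat_toNat, ite_eq_left_iff, zero_ne_one, imp_false, Decidable.not_not]
      omega
    · intro c _ hc
      rw [if_neg]; omega
  · exact sum_eq_zero fun c hc => if_neg (by rw [mem_Icc] at hc; omega)

end ZMod

theorem digit_eq_of_sum_eq_add_carry {q : ℤ} (hq : q ≠ 0) {a b ε : ℕ → ℤ}
    (h : ∀ t, ∑ i ∈ range t, b i * q ^ i = ∑ i ∈ range t, a i * q ^ i + ε t * q ^ t) (t : ℕ) :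
    b t = a t + ε (t + 1) * q - ε t := by
  have h' := h (t + 1)
  rw [sum_range_succ, sum_range_succ, h t] at h'
  exact mul_right_cancel₀ (pow_ne_zero t hq) (by linear_combination h')

section LeastResidues

variable {p : ℕ} {a : ℕ → ℤ}

theorem two_mul_abs_sum_mul_pow_lt (ha : ∀ i, |a i| ≤ ((p : ℤ) - 1) / 2) (t : ℕ) :
    2 * |∑ i ∈ range t, a i * (p : ℤ) ^ i| < (p : ℤ) ^ t :=
  (mul_abs_sum_mul_pow_le zero_le_two (Int.natCast_nonneg p)
    (fun i => by have := ha i; omega) t).trans_lt (sub_one_lt _)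

variable [Fact p.Prime]

theorem sum_digits_eq_add_carry {b : ℕ → ℕ} (ha : ∀ i, |a i| ≤ ((p : ℤ) - 1) / 2)
    (hb : ∀ i, b i < p)
    (heq : ∑' i, (a i : ℤ_[p]) * (p : ℤ_[p]) ^ i = ∑' i, (b i : ℤ_[p]) * (p : ℤ_[p]) ^ i) (t : ℕ) :
    ∑ i ∈ range t, (b i : ℤ) * (p : ℤ) ^ i =
      ∑ i ∈ range t, a i * (p : ℤ) ^ i +
        (if ∑ i ∈ range t, a i * (p : ℤ) ^ i < 0 then 1 else 0) * (p : ℤ) ^ t := by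
  have hB := mul_abs_sum_mul_pow_le zero_le_one (Int.natCast_nonneg p) (c := fun i => (b i : ℤ))
    (fun i => by have := hb i; rw [one_mul, abs_of_nonneg (Int.natCast_nonneg _)]; omega) t
  refine Int.eq_add_ite_mul_of_dvd_sub
    (PadicInt.pow_dvd_sum_sub_of_tsum_eq (by simpa only [Int.cast_natCast] using heq) t)
    (sum_nonneg fun i _ => by positivity) ?_ (two_mul_abs_sum_mul_pow_lt ha t)
  linarith [le_abs_self (∑ i ∈ range t, (b i : ℤ) * (p : ℤ) ^ i)]

theorem sum_mul_prod_eq_neg_carry (ha : ∀ i, |a i| ≤ ((p : ℤ) - 1) / 2) (t : ℕ) :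
    ∑ l ∈ range t,
        (∑ c ∈ Icc 1 ((p - 1) / 2), (((a l : ZMod p) + c) ^ (p - 1) - 1)) *
          ∏ i ∈ Ioo l t, (1 - (a i : ZMod p) ^ (p - 1)) =
      -(if ∑ i ∈ range t, a i * (p : ℤ) ^ i < 0 then 1 else 0) := by
  induction t with
  | zero => simp
  | succ t ih =>
    have ha' : |a t| < p := by have := ha t; omega
    have hA : |∑ i ∈ range t, a i * (p : ℤ) ^ i| < (p : ℤ) ^ t := by
      linarith [two_mul_abs_sum_mul_pow_lt ha t, abs_nonneg (∑ i ∈ range t, a i * (p : ℤ) ^ i)]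
    rw [sum_range_succ_mul_prod_Ioo, ih, ZMod.sum_Icc_intCast_add_pow_card_sub_one (ha t),
      ZMod.one_sub_intCast_pow_card_sub_one ha', sum_range_succ, ite_add_mul_neg hA]
    ring

end LeastResidues

theorem nlr_to_lr_general (p : ℕ) [Fact (Nat.Prime p)]
    (a : ℕ → ℤ) (b : ℕ → ℕ)
    (ha : ∀ i, |a i| ≤ (p - 1) / 2) (hb : ∀ i, b i < p)
    (heq : (∑' i : ℕ, (a i : ℤ_[p]) * (p : ℤ_[p]) ^ i)
        = ∑' i : ℕ, (b i : ℤ_[p]) * (p : ℤ_[p]) ^ i) :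
    ∀ t, (b t : ZMod p) = (a t : ZMod p) +
      ∑ l ∈ Finset.range t,
        (∑ c ∈ Finset.Icc 1 ((p - 1) / 2), (((a l : ZMod p) + c) ^ (p - 1) - 1)) *
          ∏ i ∈ Finset.Ioo l t, (1 - (a i : ZMod p) ^ (p - 1)) := by
  intro t
  have hdigit := digit_eq_of_sum_eq_add_carry
    (Nat.cast_ne_zero.mpr (Fact.out : p.Prime).ne_zero) (sum_digits_eq_add_carry ha hb heq) t
  rw [sum_mul_prod_eq_neg_carry ha, ← Int.cast_natCast, hdigit]
  push_cast [ZMod.natCast_self]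
  ring

/-- Transformation from numerically least residues to least residues: formula for `b_t`. -/
theorem nlr_to_lr (p : ℕ) [Fact (Nat.Prime p)] (hp3 : 3 ≤ p)
    (a : ℕ → ℤ) (b : ℕ → ℕ)
    (ha : ∀ i, |a i| ≤ (p - 1) / 2) (hb : ∀ i, b i < p)
    (heq : (∑' i : ℕ, (a i : ℤ_[p]) * (p : ℤ_[p]) ^ i)
        = ∑' i : ℕ, (b i : ℤ_[p]) * (p : ℤ_[p]) ^ i) :
    ∀ t, (b t : ZMod p) = (a t : ZMod p) +
      ∑ l ∈ Finset.range t,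
        (∑ c ∈ Finset.Icc 1 ((p - 1) / 2), (((a l : ZMod p) + c) ^ (p - 1) - 1)) *
          ∏ i ∈ Finset.Ioo l t, (1 - (a i : ZMod p) ^ (p - 1)) :=
  nlr_to_lr_general p a b ha hb heq
end
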